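/- Let S be an inverse semigroup with idempotents E, A a C*-algebra with compatible S-action α, and A ⋊ E the crossed product by E with the induced S-action β_s(a ⋊ e) = α_s(a) ⋊ ses*. Then the map γ defined on generators by γ((a ⋊ e) ⊠ s) = a ⋊ (es), for s ∈ S, e ∈ E with e ≤ ss* and a ∈ A_e, extends to a *-homomorphism from the *-algebra underlying (A ⋊ E) ⊠ S to the *-algebra underlying A ⋊ S; in particular γ is multiplicative: γ(((a⋊e)⊠s)((b⋊f)⊠t)) = γ((a⋊e)⊠s)·γ((b⋊f)⊠t). -/

import Mathlib

/-- An inverse semigroup: a semigroup in which every element `s` has a unique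
generalized inverse `star s` with `s * star s * s = s` and `star s * s * star s = star s`. -/
class InverseSemigroup (S : Type u) extends Semigroup S, Star S where
  mul_star_mul : ∀ s : S, s * star s * s = s
  star_mul_star : ∀ s : S, star s * s * star s = star s
  star_unique : ∀ s t : S, s * t * s = s → t * s * t = t → t = star s

variable {S A : Type} [InverseSemigroup S]
  [NonUnitalNormedRing A] [StarRing A] [CStarRing A]

/-- The convolution product `(a ⋊ s)(b ⋊ t) = a·α_s(b) ⋊ st` on finitely supported
formal sums (used both for `A ⋊ E` and for `A ⋊ S`). -/
noncomputable def convMul (α : S → A → A) (f g : S →₀ A) : S →₀ A :=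
  f.sum fun s a => g.sum fun t b => Finsupp.single (s * t) (a * α s b)

/-- The involution `(a ⋊ s)* = α_{s*}(a*) ⋊ s*`. -/
noncomputable def convStar (α : S → A → A) (f : S →₀ A) : S →₀ A :=
  f.sum fun s a => Finsupp.single (star s) (α (star s) (star a))

/-- The induced `S`-action on `A ⋊ E`: `β_s(a ⋊ e) = α_s(a) ⋊ ses*`. -/
noncomputable def betaExp (α : S → A → A) (s : S) (φ : S →₀ A) : S →₀ A :=
  φ.sum fun e a => Finsupp.single (s * e * star s) (α s a)

/-- The map `γ : (A ⋊ E) ⊠ S → A ⋊ S`, `γ((a ⋊ e) ⊠ s) = a ⋊ (es)`, on formal sums. -/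
noncomputable def gammaMap (F : S →₀ (S →₀ A)) : S →₀ A :=
  F.sum fun s φ => φ.sum fun e a => Finsupp.single (e * s) a

/-!
Everything reduces to the generators, where both sides are single terms. The key fact is that
idempotents of an inverse semigroup commute; it gives `(st)* = t*s*` and `sfs*s = sf` for
idempotent `f`. Multiplicativity is then the index identity `e(sfs*)(st) = (es)(ft)` together with
`α_e ∘ α_s = α_{es}`, and *-preservation is `(es)* = s*e` together with
`α_{s*e}(a*) = α_{s*}(α_e(a)*) = α_{s*}(a*)` for `a ∈ A_e`.
-/

namespace InverseSemigroup

variable {S : Type*} [InverseSemigroup S]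

theorem star_eq_of_inverse {s t : S} (h₁ : s * t * s = s) (h₂ : t * s * t = t) :
    star s = t :=
  (star_unique s t h₁ h₂).symm

theorem star_star (s : S) : star (star s) = s :=
  star_eq_of_inverse (star_mul_star s) (mul_star_mul s)

theorem star_eq_self_of_isIdempotentElem {e : S} (he : IsIdempotentElem e) : star e = e :=
  star_eq_of_inverse (by rw [he.eq, he.eq]) (by rw [he.eq, he.eq])

theorem isIdempotentElem_mul_star_self (s : S) : IsIdempotentElem (s * star s) := by
  rw [IsIdempotentElem, ← mul_assoc, mul_star_mul]

theorem isIdempotentElem_star_mul_self (s : S) : IsIdempotentElem (star s * s) := by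
  rw [IsIdempotentElem, ← mul_assoc, star_mul_star]

/- With `x = (pq)*`, the element `q x p` is also an inverse of `pq`, hence equals `x`; this
makes `x` idempotent, so `pq = x* = x`. -/
theorem isIdempotentElem_mul {p q : S} (hp : IsIdempotentElem p) (hq : IsIdempotentElem q) :
    IsIdempotentElem (p * q) := by
  have h₁ := mul_star_mul (p * q)
  have h₂ := star_mul_star (p * q)
  have huniq := star_unique (p * q)
  generalize hx : star (p * q) = x at h₁ h₂ huniq
  have hpqx : p * (q * (x * (p * q))) = p * q := by simpa only [mul_assoc] using h₁
  have hxpq (y : S) : x * (p * (q * (x * y))) = x * y := by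
    simpa only [mul_assoc] using congrArg (· * y) h₂
  have hqxp : q * x * p = x :=
    huniq _ (by simp only [mul_assoc, hp.mul_self_mul, hq.mul_self_mul, hpqx])
      (by simp only [mul_assoc, hp.mul_self_mul, hq.mul_self_mul, hxpq])
  have hx_idem : IsIdempotentElem x :=
    calc x * x = q * x * p * (q * x * p) := by rw [hqxp]
      _ = q * (x * p) := by simp only [mul_assoc, hxpq]
      _ = x := by rw [← mul_assoc, hqxp]
  rwa [← star_star (p * q), hx, star_eq_self_of_isIdempotentElem hx_idem]

/- Both `ef` and `fe` are idempotent and `fe` is an inverse of `ef`, so `fe = (ef)* = ef`. -/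
theorem commute_of_isIdempotentElem {e f : S} (he : IsIdempotentElem e)
    (hf : IsIdempotentElem f) : Commute e f := by
  have hef := isIdempotentElem_mul he hf
  have hfe := isIdempotentElem_mul hf he
  have hinv : star (e * f) = f * e := by
    refine star_eq_of_inverse ?_ ?_
    · simp only [mul_assoc, he.mul_self_mul, hf.mul_self_mul]
      simpa only [mul_assoc] using hef.eq
    · simp only [mul_assoc, he.mul_self_mul, hf.mul_self_mul]
      simpa only [mul_assoc] using hfe.eq
  rw [Commute, SemiconjBy, ← hinv, star_eq_self_of_isIdempotentElem hef]

theorem star_mul (s t : S) : star (s * t) = star t * star s := by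
  have hcomm : Commute (t * star t) (star s * s) :=
    commute_of_isIdempotentElem (isIdempotentElem_mul_star_self t)
      (isIdempotentElem_star_mul_self s)
  refine star_eq_of_inverse ?_ ?_
  · calc s * t * (star t * star s) * (s * t)
        = s * ((t * star t) * (star s * s)) * t := by simp only [mul_assoc]
      _ = s * star s * s * (t * star t * t) := by rw [hcomm.eq]; simp only [mul_assoc]
      _ = s * t := by rw [mul_star_mul, mul_star_mul]
  · calc star t * star s * (s * t) * (star t * star s)
        = star t * ((star s * s) * (t * star t)) * star s := by simp only [mul_assoc]
      _ = star t * t * star t * (star s * s * star s) := by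
        rw [← hcomm.eq]; simp only [mul_assoc]
      _ = star t * star s := by rw [star_mul_star, star_mul_star]

theorem mul_mul_star_mul_of_isIdempotentElem (s : S) {f : S} (hf : IsIdempotentElem f) :
    s * f * star s * s = s * f := by
  have hcomm := commute_of_isIdempotentElem hf (isIdempotentElem_star_mul_self s)
  calc s * f * star s * s = s * (f * (star s * s)) := by simp only [mul_assoc]
    _ = s * star s * s * f := by rw [hcomm.eq]; simp only [mul_assoc]
    _ = s * f := by rw [mul_star_mul]

end InverseSemigroup

section SingleFormulas

variable {S A : Type} [InverseSemigroup S] [NonUnitalNormedRing A]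

theorem gammaMap_single (s e : S) (a : A) :
    gammaMap (Finsupp.single s (Finsupp.single e a)) = Finsupp.single (e * s) a := by
  rw [gammaMap, Finsupp.sum_single_index, Finsupp.sum_single_index] <;> simp

theorem convMul_single (α : S → A → A) (s t : S) (a b : A) (h₀ : α s 0 = 0) :
    convMul α (Finsupp.single s a) (Finsupp.single t b) = Finsupp.single (s * t) (a * α s b) := by
  simp [convMul, h₀]

theorem betaExp_single (α : S → A → A) (s e : S) (a : A) (h₀ : α s 0 = 0) :
    betaExp α s (Finsupp.single e a) = Finsupp.single (s * e * star s) (α s a) := by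
  simp [betaExp, h₀]

theorem convStar_single [StarRing A] (α : S → A → A) (s : S) (a : A) (h₀ : α (star s) 0 = 0) :
    convStar α (Finsupp.single s a) = Finsupp.single (star s) (α (star s) (star a)) := by
  simp [convStar, h₀]

end SingleFormulas

theorem gammaMap_star_hom_general
    (α : S → A → A)
    (hadd : ∀ (s : S) (a b : A), α s (a + b) = α s a + α s b)
    (hstarhom : ∀ (s : S) (a : A), α s (star a) = star (α s a))
    (hcomp : ∀ (s t : S) (a : A), α s (α t a) = α (s * t) a) :
    ∀ (s t e f : S) (a b : A),
      e * e = e → f * f = f →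
      e * (s * star s) = e → f * (t * star t) = f →   -- e ≤ ss*, f ≤ tt*
      α e a = a → α f b = b →                          -- a ∈ A_e, b ∈ A_f
      -- multiplicativity on generators:
      gammaMap (Finsupp.single (s * t)
          (convMul α (Finsupp.single e a) (betaExp α s (Finsupp.single f b))))
        = convMul α (gammaMap (Finsupp.single s (Finsupp.single e a)))
            (gammaMap (Finsupp.single t (Finsupp.single f b))) ∧
      -- *-preservation on generators:
      gammaMap (Finsupp.single (star s)
          (betaExp α (star s) (Finsupp.single e (star a))))
        = convStar α (gammaMap (Finsupp.single s (Finsupp.single e a))) := by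
  intro s t e f a b he hf hes _ hae _
  have h₀ : ∀ u, α u 0 = 0 := fun u => (AddMonoidHom.mk' (α u) (hadd u)).map_zero
  have hstar_es : star (e * s) = star s * e := by
    rw [InverseSemigroup.star_mul, InverseSemigroup.star_eq_self_of_isIdempotentElem he]
  refine ⟨?_, ?_⟩
  · rw [betaExp_single α s f b (h₀ s), convMul_single α e _ a _ (h₀ e), gammaMap_single,
      gammaMap_single, gammaMap_single, convMul_single α _ _ a b (h₀ _), hcomp e s b]
    congr 1
    calc e * (s * f * star s) * (s * t) = e * (s * f * star s * s) * t := by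
          simp only [mul_assoc]
      _ = e * s * (f * t) := by
          rw [InverseSemigroup.mul_mul_star_mul_of_isIdempotentElem s hf]; simp only [mul_assoc]
  · rw [betaExp_single α (star s) e (star a) (h₀ _), gammaMap_single, gammaMap_single,
      convStar_single α _ _ (h₀ _), InverseSemigroup.star_star, hstar_es, ← hcomp, hstarhom e a, hae]
    congr 1
    rw [mul_assoc, mul_assoc, hes]

/-- the map `γ((a ⋊ e) ⊠ s) = a ⋊ (es)` (for `e ≤ ss*`, `a ∈ A_e`) extends
to a *-homomorphism from the *-algebra underlying `(A ⋊ E) ⊠ S` to that of `A ⋊ S`; in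
particular `γ` is multiplicative and *-preserving on generators, where
`(x ⊠ s)(y ⊠ t) = x·β_s(y) ⊠ st` and `(x ⊠ s)* = β_{s*}(x*) ⊠ s*`. -/
theorem gammaMap_star_hom
    (α : S → A → A)
    (hadd : ∀ (s : S) (a b : A), α s (a + b) = α s a + α s b)
    (hmulhom : ∀ (s : S) (a b : A), α s (a * b) = α s a * α s b)
    (hstarhom : ∀ (s : S) (a : A), α s (star a) = star (α s a))
    (hcomp : ∀ (s t : S) (a : A), α s (α t a) = α (s * t) a) :
    ∀ (s t e f : S) (a b : A),
      e * e = e → f * f = f →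
      e * (s * star s) = e → f * (t * star t) = f →   -- e ≤ ss*, f ≤ tt*
      α e a = a → α f b = b →                          -- a ∈ A_e, b ∈ A_f
      -- multiplicativity on generators:
      gammaMap (Finsupp.single (s * t)
          (convMul α (Finsupp.single e a) (betaExp α s (Finsupp.single f b))))
        = convMul α (gammaMap (Finsupp.single s (Finsupp.single e a)))
            (gammaMap (Finsupp.single t (Finsupp.single f b))) ∧
      -- *-preservation on generators:
      gammaMap (Finsupp.single (star s)
          (betaExp α (star s) (Finsupp.single e (star a))))
        = convStar α (gammaMap (Finsupp.single s (Finsupp.single e a))) :=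
  gammaMap_star_hom_general α hadd hstarhom hcomp
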